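/- arXiv:2303.05188 — 2 statements merged into one kernel-verified Lean document; each statement's English description precedes it below -/
import Mathlib

section
/- Let A be a completely prime filter in a restriction quantal frame Q. Then A* = {a* : a ∈ A} and A⁺ = {a⁺ : a ∈ A} are completely prime filters in the frame e↓ of projections. -/
/-- A restriction quantal frame: a frame `Q` with a monoid multiplication
distributing over arbitrary joins (a unital quantal frame), which is an
Ehresmann semigroup whose projections are exactly the elements below the
monoid unit `1` and whose unary operations `st` (`*`) and `pl` (`⁺`) preserve
joins, such that the top element is a join of partial isometries and the
partial isometries are closed under multiplication. -/
class RQF (Q : Type*) extends Order.Frame Q, Monoid Q where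
  mul_sSup_distrib : ∀ (a : Q) (S : Set Q), a * sSup S = ⨆ b ∈ S, a * b
  sSup_mul_distrib : ∀ (a : Q) (S : Set Q), sSup S * a = ⨆ b ∈ S, b * a
  st : Q → Q
  pl : Q → Q
  st_le_one : ∀ a : Q, st a ≤ 1
  pl_le_one : ∀ a : Q, pl a ≤ 1
  proj_comm : ∀ a b : Q, a ≤ 1 → b ≤ 1 → a * b = b * a
  proj_idem : ∀ a : Q, a ≤ 1 → a * a = a
  st_proj : ∀ a : Q, a ≤ 1 → st a = a
  pl_proj : ∀ a : Q, a ≤ 1 → pl a = a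
  mul_st : ∀ a : Q, a * st a = a
  pl_mul : ∀ a : Q, pl a * a = a
  st_mul_eq : ∀ a b : Q, st (a * b) = st (st a * b)
  pl_mul_eq : ∀ a b : Q, pl (a * b) = pl (a * pl b)
  st_sSup : ∀ S : Set Q, st (sSup S) = ⨆ a ∈ S, st a
  pl_sSup : ∀ S : Set Q, pl (sSup S) = ⨆ a ∈ S, pl a
  top_join_pi : sSup {a : Q | ∀ b, b ≤ a → b = pl b * a ∧ b = a * st b} = ⊤
  pi_mul_closed : ∀ a b : Q,
    (∀ c, c ≤ a → c = pl c * a ∧ c = a * st c) →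
    (∀ c, c ≤ b → c = pl c * b ∧ c = b * st c) →
    (∀ c, c ≤ a * b → c = pl c * (a * b) ∧ c = (a * b) * st c)

namespace RQF

variable {Q : Type*} [RQF Q]

/-- `a` is a partial isometry. -/
def PI (a : Q) : Prop := ∀ b, b ≤ a → b = pl b * a ∧ b = a * st b

/-- `a` and `b` are compatible. -/
def Compat (a b : Q) : Prop := a * st b = b * st a ∧ pl b * a = pl a * b

/-- A completely prime filter in `Q`: a proper filter such that whenever a
join lies in it, one of the joinands does. -/
def CPFilter (A : Set Q) : Prop :=
  A.Nonempty ∧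
  (∀ a ∈ A, ∀ b : Q, a ≤ b → b ∈ A) ∧
  (∀ a ∈ A, ∀ b ∈ A, a ⊓ b ∈ A) ∧
  (⊥ : Q) ∉ A ∧
  ∀ S : Set Q, sSup S ∈ A → ∃ s ∈ S, s ∈ A

/-- A completely prime filter in the frame `e↓ = 1↓` of projections. -/
def CPFilterProj (F : Set Q) : Prop :=
  F.Nonempty ∧
  (∀ f ∈ F, f ≤ (1 : Q)) ∧
  (∀ f ∈ F, ∀ g : Q, g ≤ (1 : Q) → f ≤ g → g ∈ F) ∧
  (∀ f ∈ F, ∀ g ∈ F, f ⊓ g ∈ F) ∧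
  (⊥ : Q) ∉ F ∧
  ∀ S : Set Q, (∀ s ∈ S, s ≤ (1 : Q)) → sSup S ∈ F → ∃ s ∈ S, s ∈ F

/-- Upward closure in `Q`. -/
def up (F : Set Q) : Set Q := {x | ∃ f ∈ F, f ≤ x}

/-- `d(A) = (A*)↑`. -/
def dF (A : Set Q) : Set Q := {x | ∃ a ∈ A, st a ≤ x}

/-- `r(A) = (A⁺)↑`. -/
def rF (A : Set Q) : Set Q := {x | ∃ a ∈ A, pl a ≤ x}

/-- `A · B = (AB)↑`. -/
def prodF (A B : Set Q) : Set Q := {x | ∃ a ∈ A, ∃ b ∈ B, a * b ≤ x}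

end RQF


namespace RQF

variable {Q : Type*} [RQF Q]

lemma rmul_mono (a : Q) {b c : Q} (h : b ≤ c) : a * b ≤ a * c := by
  have h1 : a * c = a * sSup {b, c} := by rw [sSup_pair, sup_eq_right.mpr h]
  rw [h1, mul_sSup_distrib]
  exact le_iSup₂_of_le b (by simp) le_rfl

lemma lmul_mono (a : Q) {b c : Q} (h : b ≤ c) : b * a ≤ c * a := by
  have h1 : c * a = sSup {b, c} * a := by rw [sSup_pair, sup_eq_right.mpr h]
  rw [h1, sSup_mul_distrib]
  exact le_iSup₂_of_le b (by simp) le_rfl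

lemma mul_bot' (a : Q) : a * (⊥ : Q) = ⊥ := by
  have := mul_sSup_distrib a (∅ : Set Q); simpa using this

lemma bot_mul' (a : Q) : (⊥ : Q) * a = ⊥ := by
  have := sSup_mul_distrib a (∅ : Set Q); simpa using this

lemma st_sup (a b : Q) : st (a ⊔ b) = st a ⊔ st b := by
  rw [← sSup_pair, st_sSup, iSup_pair]

lemma pl_sup (a b : Q) : pl (a ⊔ b) = pl a ⊔ pl b := by
  rw [← sSup_pair, pl_sSup, iSup_pair]

lemma st_mono {a b : Q} (h : a ≤ b) : st a ≤ st b := by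
  have : st b = st a ⊔ st b := by rw [← st_sup, sup_eq_right.mpr h]
  rw [this]; exact le_sup_left

lemma pl_mono {a b : Q} (h : a ≤ b) : pl a ≤ pl b := by
  have : pl b = pl a ⊔ pl b := by rw [← pl_sup, sup_eq_right.mpr h]
  rw [this]; exact le_sup_left

lemma proj_mul_inf {p q : Q} (hp : p ≤ 1) (hq : q ≤ 1) : p * q = p ⊓ q := by
  apply le_antisymm
  · exact le_inf (by simpa using rmul_mono p hq) (by simpa using lmul_mono q hp)
  · calc p ⊓ q = (p ⊓ q) * (p ⊓ q) := (proj_idem _ (le_trans inf_le_left hp)).symm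
      _ ≤ p * q := le_trans (rmul_mono _ inf_le_right) (lmul_mono _ inf_le_left)

end RQF

open RQF in
/-- for a completely prime filter `A` in `Q`, the sets
`A* = {a* : a ∈ A}` and `A⁺ = {a⁺ : a ∈ A}` are completely prime filters
in the frame `e↓` of projections. -/
theorem star_plus_image_cpfilterproj {Q : Type*} [RQF Q]
    (A : Set Q) (hA : CPFilter A) :
    CPFilterProj (st '' A) ∧ CPFilterProj (pl '' A) := by
  obtain ⟨hne, hup, hinf, hbot, hprime⟩ := hA
  constructor
  · refine ⟨hne.image _, ?_, ?_, ?_, ?_, ?_⟩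
    · rintro f ⟨a, _, rfl⟩; exact st_le_one a
    · rintro f ⟨a, ha, rfl⟩ g hg1 hfg
      refine ⟨a ⊔ g, hup a ha _ le_sup_left, ?_⟩
      rw [st_sup, st_proj g hg1, sup_eq_right.mpr hfg]
    · rintro f ⟨a, ha, rfl⟩ g ⟨b, hb, rfl⟩
      have hab : a ⊓ b ∈ A := hinf a ha b hb
      have hle : st (a ⊓ b) ≤ st a ⊓ st b :=
        le_inf (st_mono inf_le_left) (st_mono inf_le_right)
      refine ⟨(a ⊓ b) ⊔ (st a ⊓ st b), hup _ hab _ le_sup_left, ?_⟩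
      rw [st_sup, st_proj (st a ⊓ st b) (le_trans inf_le_left (st_le_one a)),
        sup_eq_right.mpr hle]
    · rintro ⟨a, ha, hst⟩
      apply hbot
      have : a = (⊥ : Q) := by rw [← mul_st a, hst, mul_bot']
      rwa [← this]
    · rintro S hSproj ⟨a, ha, hst⟩
      have h1 : a = sSup ((fun s => a * s) '' S) := by
        rw [sSup_image, ← mul_sSup_distrib, ← hst, mul_st]
      obtain ⟨x, ⟨s, hs, rfl⟩, hxA⟩ := hprime _ (h1 ▸ ha)
      refine ⟨s, hs, a * s, hxA, ?_⟩
      have hs1 := hSproj s hs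
      have hsle : s ≤ st a := hst ▸ le_sSup hs
      rw [st_mul_eq, st_proj _ (le_trans (rmul_mono _ hs1) (by simpa using st_le_one a)),
        proj_mul_inf (st_le_one a) hs1, inf_eq_right.mpr hsle]
  · refine ⟨hne.image _, ?_, ?_, ?_, ?_, ?_⟩
    · rintro f ⟨a, _, rfl⟩; exact pl_le_one a
    · rintro f ⟨a, ha, rfl⟩ g hg1 hfg
      refine ⟨a ⊔ g, hup a ha _ le_sup_left, ?_⟩
      rw [pl_sup, pl_proj g hg1, sup_eq_right.mpr hfg]
    · rintro f ⟨a, ha, rfl⟩ g ⟨b, hb, rfl⟩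
      have hab : a ⊓ b ∈ A := hinf a ha b hb
      have hle : pl (a ⊓ b) ≤ pl a ⊓ pl b :=
        le_inf (pl_mono inf_le_left) (pl_mono inf_le_right)
      refine ⟨(a ⊓ b) ⊔ (pl a ⊓ pl b), hup _ hab _ le_sup_left, ?_⟩
      rw [pl_sup, pl_proj (pl a ⊓ pl b) (le_trans inf_le_left (pl_le_one a)),
        sup_eq_right.mpr hle]
    · rintro ⟨a, ha, hpl⟩
      apply hbot
      have : a = (⊥ : Q) := by rw [← pl_mul a, hpl, bot_mul']
      rwa [← this]
    · rintro S hSproj ⟨a, ha, hpl⟩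
      have h1 : a = sSup ((fun s => s * a) '' S) := by
        rw [sSup_image, ← sSup_mul_distrib, ← hpl, pl_mul]
      obtain ⟨x, ⟨s, hs, rfl⟩, hxA⟩ := hprime _ (h1 ▸ ha)
      refine ⟨s, hs, s * a, hxA, ?_⟩
      have hs1 := hSproj s hs
      have hsle : s ≤ pl a := hpl ▸ le_sSup hs
      rw [pl_mul_eq, pl_proj _ (le_trans (rmul_mono _ (pl_le_one a)) (by simpa using hs1)),
        proj_mul_inf hs1 (pl_le_one a), inf_eq_left.mpr hsle]
end

section
/- Let Q be an Ehresmann quantal frame with unit e. Then Q is spatial (i.e., X_a = X_b implies a = b, where X_a is the set of completely prime filters containing a) if and only if the frame e↓ of projections is spatial. -/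
namespace RQF

variable {Q : Type*} [RQF Q]

section Aux

variable {Q : Type*} [RQF Q]

lemma mul_sup' (a b c : Q) : a * (b ⊔ c) = a * b ⊔ a * c := by
  have h := RQF.mul_sSup_distrib a {b, c}
  simpa [iSup_or, iSup_sup_eq] using h

lemma sup_mul' (a b c : Q) : (b ⊔ c) * a = b * a ⊔ c * a := by
  have h := RQF.sSup_mul_distrib a {b, c}
  simpa [iSup_or, iSup_sup_eq] using h

lemma mul_le_mul_left'' {b c : Q} (h : b ≤ c) (a : Q) : a * b ≤ a * c := by
  have := mul_sup' a b c
  rw [sup_eq_right.mpr h] at this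
  rw [this]; exact le_sup_left

lemma mul_le_mul_right'' {b c : Q} (h : b ≤ c) (a : Q) : b * a ≤ c * a := by
  have := sup_mul' a b c
  rw [sup_eq_right.mpr h] at this
  rw [this]; exact le_sup_left

lemma mul_le_mul'' {a b c d : Q} (h : a ≤ b) (h' : c ≤ d) : a * c ≤ b * d :=
  (mul_le_mul_left'' h' a).trans (mul_le_mul_right'' h d)

lemma proj_mul_eq_inf {f g : Q} (hf : f ≤ 1) (hg : g ≤ 1) : f * g = f ⊓ g := by
  apply le_antisymm
  · exact le_inf (by simpa using mul_le_mul_left'' hg f)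
      (by simpa using mul_le_mul_right'' hf g)
  · have h1 : f ⊓ g ≤ (1 : Q) := inf_le_left.trans hf
    calc f ⊓ g = (f ⊓ g) * (f ⊓ g) := (RQF.proj_idem _ h1).symm
      _ ≤ f * g := mul_le_mul'' inf_le_left inf_le_right

lemma pl_bot : RQF.pl (⊥ : Q) = ⊥ := by
  have h := RQF.pl_sSup (∅ : Set Q)
  simpa using h

lemma PI.mono {p c : Q} (hp : RQF.PI p) (hc : c ≤ p) : RQF.PI c := by
  intro d hd
  obtain ⟨h1, h2⟩ := hp d (hd.trans hc)
  constructor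
  · refine le_antisymm ?_ ?_
    · calc d = RQF.pl d * d := (RQF.pl_mul d).symm
        _ ≤ RQF.pl d * c := mul_le_mul_left'' hd _
    · calc RQF.pl d * c ≤ RQF.pl d * p := mul_le_mul_left'' hc _
        _ = d := h1.symm
  · refine le_antisymm ?_ ?_
    · calc d = d * RQF.st d := (RQF.mul_st d).symm
        _ ≤ c * RQF.st d := mul_le_mul_right'' hd _
    · calc c * RQF.st d ≤ p * RQF.st d := mul_le_mul_right'' hc _
        _ = d := h2.symm

lemma exists_pi_not_le {a b : Q} (h : ¬ a ≤ b) :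
    ∃ c : Q, RQF.PI c ∧ c ≤ a ∧ ¬ c ≤ b := by
  by_contra hc
  push_neg at hc
  apply h
  have ha : a = a ⊓ sSup {p : Q | RQF.PI p} := by
    rw [show sSup {p : Q | RQF.PI p} = (⊤ : Q) from RQF.top_join_pi, inf_top_eq]
  rw [ha, inf_sSup_eq]
  refine iSup_le fun p => iSup_le fun hp => ?_
  exact hc _ (PI.mono hp inf_le_right) inf_le_left

/-- Key construction: from a completely prime filter of projections separating
appropriately, build a completely prime filter of `Q`. -/
lemma exists_cpf
    (hsep : ∀ f g : Q, f ≤ 1 → g ≤ 1 → ¬ f ≤ g →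
      ∃ F : Set Q, RQF.CPFilterProj F ∧ f ∈ F ∧ g ∉ F)
    {a b : Q} (h : ¬ a ≤ b) :
    ∃ A : Set Q, RQF.CPFilter A ∧ a ∈ A ∧ b ∉ A := by
  obtain ⟨c, hcPI, hca, hcb⟩ := exists_pi_not_le h
  set g : Q := sSup {f : Q | f ≤ 1 ∧ f * c ≤ b} with hg
  have hg1 : g ≤ (1 : Q) := sSup_le fun f hf => hf.1
  have hgc : g * c ≤ b := by
    rw [hg, RQF.sSup_mul_distrib]
    exact iSup_le fun f => iSup_le fun hf => hf.2
  have hplc : ¬ RQF.pl c ≤ g := by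
    intro hle
    apply hcb
    calc c = RQF.pl c * c := (RQF.pl_mul c).symm
      _ ≤ g * c := mul_le_mul_right'' hle _
      _ ≤ b := hgc
  obtain ⟨F, hF, hplcF, hgF⟩ := hsep (RQF.pl c) g (RQF.pl_le_one c) hg1 hplc
  obtain ⟨hFne, hF1, hFup, hFinf, hFbot, hFprime⟩ := hF
  -- the filter
  refine ⟨{x | ∃ f ∈ F, f * c ≤ x}, ⟨⟨a, RQF.pl c, hplcF, by
      rw [RQF.pl_mul]; exact hca⟩, ?_, ?_, ?_, ?_⟩,
    ⟨RQF.pl c, hplcF, by rw [RQF.pl_mul]; exact hca⟩, ?_⟩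
  · rintro x ⟨f, hf, hfx⟩ y hxy
    exact ⟨f, hf, hfx.trans hxy⟩
  · rintro x ⟨f, hf, hfx⟩ y ⟨f', hf', hfy⟩
    refine ⟨f ⊓ f', hFinf f hf f' hf', le_inf ?_ ?_⟩
    · exact (mul_le_mul_right'' inf_le_left c).trans hfx
    · exact (mul_le_mul_right'' inf_le_right c).trans hfy
  · rintro ⟨f, hf, hfb⟩
    have hfc : f * c = ⊥ := le_bot_iff.mp hfb
    have hkey : f ⊓ RQF.pl c = ⊥ := by
      have h1 : RQF.pl (f * c) = f ⊓ RQF.pl c := by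
        rw [RQF.pl_mul_eq, proj_mul_eq_inf (hF1 f hf) (RQF.pl_le_one c),
          RQF.pl_proj _ (inf_le_left.trans (hF1 f hf))]
      rw [hfc, pl_bot] at h1
      exact h1.symm
    exact hFbot (hkey ▸ hFinf f hf _ hplcF)
  · rintro S ⟨f, hf, hfS⟩
    have hfc_le_c : f * c ≤ c := by
      simpa using mul_le_mul_right'' (hF1 f hf) c
    -- f*c = ⨆ s ∈ S, f*c ⊓ s
    have hdecomp : f * c = ⨆ s ∈ S, f * c ⊓ s := by
      conv_lhs => rw [← inf_eq_left.mpr hfS, inf_sSup_eq]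
    have hplfc : RQF.pl (f * c) = f ⊓ RQF.pl c := by
      rw [RQF.pl_mul_eq, proj_mul_eq_inf (hF1 f hf) (RQF.pl_le_one c),
        RQF.pl_proj _ (inf_le_left.trans (hF1 f hf))]
    set T : Set Q := (fun s => RQF.pl (f * c ⊓ s)) '' S with hT
    have hsSupT : sSup T = f ⊓ RQF.pl c := by
      rw [hT, sSup_image, ← hplfc]
      conv_rhs => rw [hdecomp]
      rw [show (⨆ s ∈ S, f * c ⊓ s) = sSup ((fun s => f * c ⊓ s) '' S) by
        rw [sSup_image], RQF.pl_sSup, iSup_image]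
    have hTF : sSup T ∈ F := hsSupT ▸ hFinf f hf _ hplcF
    obtain ⟨t, ht, htF⟩ := hFprime T
      (by rintro t ⟨s, hs, rfl⟩; exact RQF.pl_le_one _) hTF
    obtain ⟨s, hsS, rfl⟩ := ht
    refine ⟨s, hsS, RQF.pl (f * c ⊓ s), htF, ?_⟩
    have hd := (hcPI (f * c ⊓ s) (inf_le_left.trans hfc_le_c)).1
    rw [← hd]; exact inf_le_right
  · rintro ⟨f, hf, hfb⟩
    exact hgF (hFup f hf g hg1 (le_sSup ⟨hF1 f hf, hfb⟩))

end Aux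

end RQF

open RQF in
/-- `Q` is spatial (`X_a = X_b` implies `a = b`) iff the frame
`e↓` of projections is spatial. -/
theorem spatial_iff_projections_spatial {Q : Type*} [RQF Q] :
    (∀ a b : Q,
        {A : Set Q | CPFilter A ∧ a ∈ A} = {A : Set Q | CPFilter A ∧ b ∈ A} →
        a = b) ↔
    (∀ f g : Q, f ≤ 1 → g ≤ 1 → ¬ f ≤ g →
        ∃ F : Set Q, CPFilterProj F ∧ f ∈ F ∧ g ∉ F) := by
  constructor
  · intro hQ f g hf hg hfg
    have hex : ∃ A : Set Q, CPFilter A ∧ f ∈ A ∧ g ∉ A := by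
      by_contra hno
      push_neg at hno
      apply hfg
      have heq : {A : Set Q | CPFilter A ∧ f ⊔ g ∈ A}
          = {A : Set Q | CPFilter A ∧ g ∈ A} := by
        ext A
        simp only [Set.mem_setOf_eq]
        constructor
        · rintro ⟨hA, hfgA⟩
          refine ⟨hA, ?_⟩
          have hsup : sSup {f, g} ∈ A := by rwa [sSup_pair]
          obtain ⟨s, hs, hsA⟩ := hA.2.2.2.2 _ hsup
          rcases hs with rfl | rfl
          · exact hno A hA hsA
          · exact hsA
        · rintro ⟨hA, hgA⟩
          exact ⟨hA, hA.2.1 g hgA _ le_sup_right⟩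
      have h := hQ _ _ heq
      exact le_trans le_sup_left h.le
    obtain ⟨A, hA, hfA, hgA⟩ := hex
    refine ⟨{x ∈ A | x ≤ 1}, ⟨⟨f, hfA, hf⟩, fun x hx => hx.2, ?_, ?_, ?_, ?_⟩,
      ⟨hfA, hf⟩, fun hgF => hgA hgF.1⟩
    · intro x hx y hy1 hxy
      exact ⟨hA.2.1 x hx.1 y hxy, hy1⟩
    · intro x hx y hy
      exact ⟨hA.2.2.1 x hx.1 y hy.1, inf_le_left.trans hx.2⟩
    · exact fun h => hA.2.2.2.1 h.1
    · intro S hS1 hsup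
      obtain ⟨s, hsS, hsA⟩ := hA.2.2.2.2 S hsup.1
      exact ⟨s, hsS, hsA, hS1 s hsS⟩
  · intro hsep a b hX
    have key : ∀ x y : Q,
        {A : Set Q | CPFilter A ∧ x ∈ A} = {A : Set Q | CPFilter A ∧ y ∈ A} →
        x ≤ y := by
      intro x y hxy
      by_contra hxy'
      obtain ⟨A, hA, hxA, hyA⟩ := RQF.exists_cpf hsep hxy'
      have hmem : A ∈ {A : Set Q | CPFilter A ∧ y ∈ A} := hxy ▸ ⟨hA, hxA⟩
      exact hyA hmem.2
    exact le_antisymm (key a b hX) (key b a hX.symm)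
end
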